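/- Under the hypotheses of the previous setting (ttt with unique source, Ū satisfying (I1)-(I2)), if Desc(i) ∩ U = Desc(j) ∩ U for distinct nodes i, j, then |Desc(i) ∩ U| ≥ 2, and for every node k ∉ {i,j}, Desc(k) ∩ U ≠ Desc(i) ∩ U. -/

import Mathlib

open scoped Classical

universe u

variable {V : Type u}

/-- The undirected skeleton of a directed graph given by edge relation `E`. -/
def skeleton (E : V → V → Prop) : SimpleGraph V where
  Adj u v := u ≠ v ∧ (E u v ∨ E v u)
  symm := ⟨fun u v h => ⟨h.1.symm, h.2.symm⟩⟩
  loopless := ⟨fun v h => h.1 rfl⟩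

/-- A set of vertices is biconnected if the induced subgraph is connected and
remains connected after removal of any single vertex. -/
def IsBiconnected (G : SimpleGraph V) (S : Set V) : Prop :=
  (G.induce S).Connected ∧ ∀ v ∈ S, (G.induce (S \ {v})).Connected

/-- A block graph: every maximal biconnected set of vertices is a clique. -/
def IsBlockGraph (G : SimpleGraph V) : Prop :=
  ∀ S : Set V, IsBiconnected G S →
    (∀ S', S ⊆ S' → IsBiconnected G S' → S = S') → G.IsClique S

/-- A tree of transitive tournaments: a (finite) directed acyclic graph that is
connected and whose skeleton is a block graph. -/
def IsTTT (E : V → V → Prop) : Prop :=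
  (∀ v, ¬ Relation.TransGen E v v) ∧ (skeleton E).Connected ∧ IsBlockGraph (skeleton E)

/-- `l` is the full vertex sequence of a directed path from `a` to `b`. -/
def IsDirSeq (E : V → V → Prop) (a b : V) (l : List V) : Prop :=
  l.Chain' E ∧ l.head? = some a ∧ l.getLast? = some b

/-- A maximal clique of a simple graph. -/
def IsMaxClique (G : SimpleGraph V) (S : Set V) : Prop :=
  G.IsClique S ∧ ∀ S', G.IsClique S' → S ⊆ S' → S = S'

/-- The product of the edge weights along a vertex sequence. -/
def prodAlong (c : V → V → ℝ) : List V → ℝ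
  | [] => 1
  | [_] => 1
  | a :: b :: rest => c a b * prodAlong c (b :: rest)

/-!
In a tree of transitive tournaments a cycle is biconnected, hence lies in one block, so its
vertices are pairwise adjacent. With a unique source this forces any two vertices with a common
descendant to be comparable, so the vertices sharing a set `D` of observed descendants form a
chain. A latent vertex has two children, which by induction shows that `D = {o}` is only possible
for `o` itself. If three vertices share `D`, take consecutive ones `w → x → y` in the chain: the
strict descendants of `w` lie below `x` and those of `x` below `y`. Closing cycles through a
second child of `w` makes `w` adjacent to every vertex of the maximal clique of which `x` is the
source, contradicting maximality.
-/

open Relation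

namespace SimpleGraph

variable {G : SimpleGraph V}

theorem connected_induce_of_isChain {l : List V} (hl : l.IsChain G.Adj) (hne : l ≠ []) :
    (G.induce {v | v ∈ l}).Connected := by
  have := (Walk.ofSupport l hne hl).connected_induce_support
  rwa [Walk.support_ofSupport] at this

theorem isBiconnected_of_isChain_cycle {a : V} {l : List V}
    (hl : (a :: l ++ [a]).IsChain G.Adj) (hnd : (a :: l).Nodup) :
    IsBiconnected G {v | v ∈ a :: l} := by
  have hne : l ≠ [] := by
    rintro rfl
    exact G.loopless.irrefl a (List.isChain_pair.1 hl)
  refine ⟨connected_induce_of_isChain (hl.left_of_append (l₁ := a :: l)) (by simp), ?_⟩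
  intro v hv
  rcases List.mem_cons.1 hv with rfl | hv
  · have hset : {x | x ∈ v :: l} \ {v} = {x | x ∈ l} := by
      ext x
      simp only [List.nodup_cons] at hnd
      simp only [Set.mem_sdiff, Set.mem_ofPred_eq, List.mem_cons, Set.mem_singleton_iff]
      grind
    rw [hset]
    exact connected_induce_of_isChain hl.tail.left_of_append hne
  · -- removing `v` from the cycle `a :: s ++ v :: t` leaves the path `t ++ [a] ++ s`
    obtain ⟨s, t, rfl⟩ := List.append_of_mem hv
    have hsplit := (List.isChain_split (l₁ := a :: s) (c := v) (l₂ := t ++ [a])).1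
      (by simpa using hl)
    have hrot : (t ++ [a] ++ s).IsChain G.Adj :=
      hsplit.2.tail.append_overlap (l₂ := [a]) hsplit.1.left_of_append (by simp)
    have hset : {x | x ∈ a :: (s ++ v :: t)} \ {v} = {x | x ∈ t ++ [a] ++ s} := by
      ext x
      simp only [List.nodup_cons, List.nodup_append, List.mem_append, List.mem_cons] at hnd
      simp only [Set.mem_sdiff, Set.mem_ofPred_eq, List.mem_cons, List.mem_append,
        Set.mem_singleton_iff]
      grind
    rw [hset]
    exact connected_induce_of_isChain hrot (by simp)

end SimpleGraph

section BlockGraph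

variable {G : SimpleGraph V}

theorem IsBlockGraph.isClique_of_isBiconnected [Finite V] (hG : IsBlockGraph G) {S : Set V}
    (hS : IsBiconnected G S) : G.IsClique S := by
  obtain ⟨T, hST, hT⟩ := Finite.exists_le_maximal (p := IsBiconnected G) hS
  exact (hG T hT.prop fun S' hTS' hS' => hT.eq_of_le hS' hTS').subset hST

theorem IsBlockGraph.isClique_of_paths [Finite V] (hG : IsBlockGraph G) {a b : V}
    {P Q : List V} (hP : (a :: P ++ [b]).IsChain G.Adj) (hQ : (a :: Q ++ [b]).IsChain G.Adj)
    (hPn : (a :: P ++ [b]).Nodup) (hQn : (a :: Q ++ [b]).Nodup) (hPQ : P.Disjoint Q) :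
    G.IsClique {v | v ∈ a :: P ++ b :: Q} := by
  have hQr : ([b] ++ (Q.reverse ++ [a])).IsChain G.Adj := by
    simpa using List.isChain_reverse.2 (hQ.imp fun _ _ h => h.symm)
  have hcyc : (a :: (P ++ b :: Q.reverse) ++ [a]).IsChain G.Adj := by
    simpa using hP.append_overlap (l₁ := a :: P) hQr (by simp)
  have hnd : (a :: (P ++ b :: Q.reverse)).Nodup := by
    simp only [List.nodup_cons, List.nodup_append, List.mem_append, List.mem_cons,
      List.mem_reverse, List.nodup_reverse] at hPn hQn ⊢
    grind [List.Disjoint]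
  have hset : {v | v ∈ a :: P ++ b :: Q} = {v | v ∈ a :: (P ++ b :: Q.reverse)} := by
    ext v
    simp
  rw [hset]
  exact IsBlockGraph.isClique_of_isBiconnected hG (G.isBiconnected_of_isChain_cycle hcyc hnd)

end BlockGraph

section Dag

variable {E : V → V → Prop}

theorem ne_of_edge (hac : ∀ v, ¬ TransGen E v v) {a b : V} (h : E a b) : a ≠ b := by
  rintro rfl
  exact hac a (.single h)

theorem eq_of_reflTransGen_of_reflTransGen (hac : ∀ v, ¬ TransGen E v v) {a b : V}
    (hab : ReflTransGen E a b) (hba : ReflTransGen E b a) : a = b := by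
  rcases reflTransGen_iff_eq_or_transGen.1 hab with h | hab
  · exact h.symm
  rcases reflTransGen_iff_eq_or_transGen.1 hba with h | hba
  · exact h
  exact absurd (hab.trans hba) (hac a)

theorem edge_of_adj_of_reflTransGen (hac : ∀ v, ¬ TransGen E v v) {a b : V}
    (hadj : (skeleton E).Adj a b) (hab : ReflTransGen E a b) : E a b :=
  hadj.2.resolve_right fun hba =>
    hadj.1 (eq_of_reflTransGen_of_reflTransGen hac hab (.single hba))

theorem transGen_of_reflTransGen_of_ne {a b : V} (h : ReflTransGen E a b) (hne : a ≠ b) :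
    TransGen E a b :=
  (reflTransGen_iff_eq_or_transGen.1 h).resolve_left hne.symm

theorem wellFounded_transGen [Finite V] (hac : ∀ v, ¬ TransGen E v v) :
    WellFounded (TransGen E) :=
  have : Std.Irrefl (TransGen E) := ⟨hac⟩
  Finite.wellFounded_of_trans_of_irrefl _

theorem wellFounded_flip_transGen [Finite V] (hac : ∀ v, ¬ TransGen E v v) :
    WellFounded (flip (TransGen E)) :=
  have : IsTrans V (flip (TransGen E)) := ⟨fun _ _ _ h₁ h₂ => h₂.trans h₁⟩
  have : Std.Irrefl (flip (TransGen E)) := ⟨hac⟩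
  Finite.wellFounded_of_trans_of_irrefl _

theorem exists_transGen_minimal [Finite V] (hac : ∀ v, ¬ TransGen E v v) {S : Set V}
    (hS : S.Nonempty) : ∃ a ∈ S, ∀ b ∈ S, ¬ TransGen E b a :=
  (wellFounded_transGen hac).has_min S hS

theorem exists_transGen_maximal [Finite V] (hac : ∀ v, ¬ TransGen E v v) {S : Set V}
    (hS : S.Nonempty) : ∃ a ∈ S, ∀ b ∈ S, ¬ TransGen E a b :=
  (wellFounded_flip_transGen hac).has_min S hS

theorem reflTransGen_of_unique_source [Finite V] (hac : ∀ v, ¬ TransGen E v v)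
    (hsrc : ∃! s, ∀ w, ¬ E w s) {s : V} (hs : ∀ w, ¬ E w s) (v : V) : ReflTransGen E s v := by
  obtain ⟨a, hav, hmin⟩ := exists_transGen_minimal hac (S := {a | ReflTransGen E a v}) ⟨v, .refl⟩
  have ha : ∀ w, ¬ E w a := fun w hw => hmin w (.head hw hav) (.single hw)
  rwa [hsrc.unique hs ha]

theorem nodup_of_isChain (hac : ∀ v, ¬ TransGen E v v) {l : List V} (hl : l.IsChain E) :
    l.Nodup :=
  (hl.imp fun _ _ => TransGen.single).pairwise.imp fun h heq => by subst heq; exact hac _ h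

theorem pairwise_reflTransGen_of_isChain {l : List V} (hl : l.IsChain E) :
    l.Pairwise (ReflTransGen E) :=
  (hl.imp fun _ _ => ReflTransGen.single).pairwise

theorem reflTransGen_of_mem_of_isChain_cons {a v : V} {l : List V} (hl : (a :: l).IsChain E)
    (hv : v ∈ a :: l) : ReflTransGen E a v := by
  rcases List.mem_cons.1 hv with rfl | hv
  · exact .refl
  · exact (List.pairwise_cons.1 (pairwise_reflTransGen_of_isChain hl)).1 v hv

theorem transGen_of_mem_of_isChain {a b v : V} {l : List V} (hl : (a :: l ++ [b]).IsChain E)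
    (hv : v ∈ l) : TransGen E a v ∧ TransGen E v b := by
  have hpw := (hl.imp fun _ _ => TransGen.single).pairwise
  obtain ⟨hhead, htail⟩ := List.pairwise_cons.1 hpw
  exact ⟨hhead v (by simp [hv]), (List.pairwise_append.1 htail).2.2 v hv b (by simp)⟩

theorem reflTransGen_total_of_isChain {l : List V} (hl : l.IsChain E) {a b : V} (ha : a ∈ l)
    (hb : b ∈ l) : ReflTransGen E a b ∨ ReflTransGen E b a :=
  List.Pairwise.forall_of_forall_of_flip (R := fun a b => ReflTransGen E a b ∨ ReflTransGen E b a)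
    (fun _ _ => .inl .refl) ((pairwise_reflTransGen_of_isChain hl).imp .inl)
    ((pairwise_reflTransGen_of_isChain hl).imp .inr) ha hb

theorem isChain_skeleton_of_isChain (hac : ∀ v, ¬ TransGen E v v) {l : List V}
    (hl : l.IsChain E) : l.IsChain (skeleton E).Adj :=
  hl.imp fun _ _ h => ⟨ne_of_edge hac h, .inl h⟩

theorem exists_isChain_of_transGen {a b : V} (h : TransGen E a b) :
    ∃ l, (a :: l ++ [b]).IsChain E := by
  induction h with
  | single h => exact ⟨[], List.isChain_pair.2 h⟩
  | @tail b c _ hbc ih =>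
    obtain ⟨l, hl⟩ := ih
    refine ⟨l ++ [b], ?_⟩
    simpa using hl.append_overlap (l₁ := a :: l) (List.isChain_pair.2 hbc) (by simp)

theorem exists_isChain_mem_of_transGen {a x b : V} (hax : TransGen E a x) (hxb : TransGen E x b) :
    ∃ l, (a :: l ++ [b]).IsChain E ∧ x ∈ l := by
  obtain ⟨l₁, h₁⟩ := exists_isChain_of_transGen hax
  obtain ⟨l₂, h₂⟩ := exists_isChain_of_transGen hxb
  exact ⟨l₁ ++ x :: l₂, by simpa using h₁.append_overlap (l₁ := a :: l₁) h₂ (by simp), by simp⟩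

theorem IsTTT.isClique_of_paths [Finite V] (hE : IsTTT E) {a b : V} {P Q : List V}
    (hP : (a :: P ++ [b]).IsChain E) (hQ : (a :: Q ++ [b]).IsChain E) (hPQ : P.Disjoint Q) :
    (skeleton E).IsClique {v | v ∈ a :: P ++ b :: Q} :=
  IsBlockGraph.isClique_of_paths hE.2.2 (isChain_skeleton_of_isChain hE.1 hP)
    (isChain_skeleton_of_isChain hE.1 hQ) (nodup_of_isChain hE.1 hP) (nodup_of_isChain hE.1 hQ)
    hPQ

theorem IsTTT.reflTransGen_total_of_reflTransGen [Finite V] (hE : IsTTT E)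
    (hsrc : ∃! s, ∀ w, ¬ E w s) {x y u : V} (hx : ReflTransGen E x u)
    (hy : ReflTransGen E y u) : ReflTransGen E x y ∨ ReflTransGen E y x := by
  have hac := hE.1
  by_contra! hxy
  obtain ⟨hnxy, hnyx⟩ := hxy
  obtain ⟨s, hs⟩ := hsrc.exists
  have hsv := reflTransGen_of_unique_source hac hsrc hs
  obtain ⟨m, ⟨hmx, hmy⟩, hmmax⟩ :=
    exists_transGen_maximal hac (S := {v | ReflTransGen E v x ∧ ReflTransGen E v y})
      ⟨s, hsv x, hsv y⟩
  obtain ⟨n, ⟨hxn, hyn⟩, hnmin⟩ :=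
    exists_transGen_minimal hac (S := {v | ReflTransGen E x v ∧ ReflTransGen E y v}) ⟨u, hx, hy⟩
  obtain ⟨P, hP, hxP⟩ := exists_isChain_mem_of_transGen
    (transGen_of_reflTransGen_of_ne hmx (by rintro rfl; exact hnxy hmy))
    (transGen_of_reflTransGen_of_ne hxn (by rintro rfl; exact hnyx hyn))
  obtain ⟨Q, hQ, hyQ⟩ := exists_isChain_mem_of_transGen
    (transGen_of_reflTransGen_of_ne hmy (by rintro rfl; exact hnyx hmx))
    (transGen_of_reflTransGen_of_ne hyn (by rintro rfl; exact hnxy hxn))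
  -- a common vertex of the two paths would be a common ancestor below `m` or a common
  -- descendant above `n`
  have hPQ : P.Disjoint Q := by
    intro v hvP hvQ
    rcases reflTransGen_total_of_isChain hP (a := v) (b := x) (by simp [hvP]) (by simp [hxP])
      with hvx | hxv <;>
    rcases reflTransGen_total_of_isChain hQ (a := v) (b := y) (by simp [hvQ]) (by simp [hyQ])
      with hvy | hyv
    · exact hmmax v ⟨hvx, hvy⟩ (transGen_of_mem_of_isChain hP hvP).1
    · exact hnyx (hyv.trans hvx)
    · exact hnxy (hxv.trans hvy)
    · exact hnmin v ⟨hxv, hyv⟩ (transGen_of_mem_of_isChain hP hvP).2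
  have hadj := hE.isClique_of_paths hP hQ hPQ
    (show x ∈ {v | v ∈ m :: P ++ n :: Q} by simp [hxP])
    (show y ∈ {v | v ∈ m :: P ++ n :: Q} by simp [hyQ]) (by rintro rfl; exact hnxy .refl)
  exact hadj.2.elim (fun h => hnxy (.single h)) fun h => hnyx (.single h)

theorem edge_of_forall_transGen (hac : ∀ v, ¬ TransGen E v v) {x y : V} (hxy : TransGen E x y)
    (h : ∀ z, TransGen E x z → ReflTransGen E y z) : E x y := by
  obtain ⟨c, hxc, hcy⟩ := TransGen.head'_iff.1 hxy
  rwa [eq_of_reflTransGen_of_reflTransGen hac hcy (h c (.single hxc))] at hxc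

theorem IsTTT.not_maxClique_source [Finite V] (hE : IsTTT E) {w x y : V}
    (hwx : E w x) (hxy : E x y) (hw : ∃ a b, a ≠ b ∧ E w a ∧ E w b)
    (hdw : ∀ z, TransGen E w z → ReflTransGen E x z)
    (hdx : ∀ z, TransGen E x z → ReflTransGen E y z) :
    ¬ ∃ S, IsMaxClique (skeleton E) S ∧ x ∈ S ∧ ∀ v ∈ S, ¬ E v x := by
  intro hx
  have hac := hE.1
  have hwy_ne : w ≠ y := by
    rintro rfl
    exact hac w (.tail (.single hwx) hxy)
  obtain ⟨γ, hwγ, hγx⟩ : ∃ γ, E w γ ∧ γ ≠ x := by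
    obtain ⟨a, b, hab, ha, hb⟩ := hw
    by_cases hax : a = x
    · exact ⟨b, hb, fun hbx => hab (hax.trans hbx.symm)⟩
    · exact ⟨a, ha, hax⟩
  have hwy : E w y := by
    have hyγ : ReflTransGen E y γ :=
      hdx γ (transGen_of_reflTransGen_of_ne (hdw γ (.single hwγ)) hγx.symm)
    rcases eq_or_ne y γ with rfl | hyγ_ne
    · exact hwγ
    obtain ⟨l, hl⟩ := exists_isChain_of_transGen (transGen_of_reflTransGen_of_ne hyγ hyγ_ne)
    have hcl := hE.isClique_of_paths (P := []) (Q := x :: y :: l) (List.isChain_pair.2 hwγ)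
      ((hl.cons_cons hxy).cons_cons hwx) (List.disjoint_nil_left _)
    exact edge_of_adj_of_reflTransGen hac (hcl (by simp) (by simp) hwy_ne)
      (.tail (.single hwx) hxy)
  obtain ⟨S, ⟨hSc, hSmax⟩, hxS, hSx⟩ := hx
  have hwS : ∀ c ∈ S, w ≠ c → (skeleton E).Adj w c := by
    intro c hc hwc
    rcases eq_or_ne c x with rfl | hcx
    · exact ⟨hwc, .inl hwx⟩
    have hxc : E x c := (hSc hxS hc hcx.symm).2.resolve_right (hSx c hc)
    rcases eq_or_ne y c with rfl | hyc_ne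
    · exact ⟨hwc, .inl hwy⟩
    obtain ⟨l, hl⟩ := exists_isChain_of_transGen
      (transGen_of_reflTransGen_of_ne (hdx c (.single hxc)) hyc_ne)
    have hxl : [x].Disjoint (y :: l) := by
      intro v hv hvl
      obtain rfl : v = x := by simpa using hv
      exact hac v
        (.head' hxy (reflTransGen_of_mem_of_isChain_cons hl (List.mem_append_left _ hvl)))
    exact hE.isClique_of_paths (P := [x]) (Q := y :: l) ((List.isChain_pair.2 hxc).cons_cons hwx)
      (hl.cons_cons hwy) hxl (by simp) (by simp) hwc
  have hins : insert w S = S :=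
    (hSmax _ (SimpleGraph.isClique_insert.2 ⟨hSc, hwS⟩) (Set.subset_insert w S)).symm
  exact hSx w (hins ▸ Set.mem_insert w S) hwx

end Dag

/-- `Desc(v) ∩ U` in the notation of the paper, with `U = Ubarᶜ` the observed vertices. -/
def observedDesc (E : V → V → Prop) (Ubar : Set V) (v : V) : Set V :=
  {w | ReflTransGen E v w} ∩ Ubarᶜ

def CoversIn (E : V → V → Prop) (W : Set V) (x y : V) : Prop :=
  x ∈ W ∧ y ∈ W ∧ TransGen E x y ∧ ∀ z ∈ W, TransGen E x z → ReflTransGen E z y → z = y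

section Observed

variable {E : V → V → Prop} {Ubar : Set V}

theorem observedDesc_anti {v w : V} (h : ReflTransGen E v w) :
    observedDesc E Ubar w ⊆ observedDesc E Ubar v :=
  fun _ hz => ⟨h.trans hz.1, hz.2⟩

theorem observedDesc_nonempty [Finite V] (hac : ∀ v, ¬ TransGen E v v)
    (hchild : ∀ u ∈ Ubar, ∃ c, E u c) (v : V) : (observedDesc E Ubar v).Nonempty := by
  obtain ⟨w, hvw, hmax⟩ :=
    exists_transGen_maximal hac (S := {w | ReflTransGen E v w}) ⟨v, .refl⟩
  refine ⟨w, hvw, fun hw => ?_⟩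
  obtain ⟨c, hc⟩ := hchild w hw
  exact hmax c (hvw.tail hc) (.single hc)

theorem eq_of_observedDesc_eq_singleton [Finite V] (hac : ∀ v, ¬ TransGen E v v)
    (hI1 : ∀ u ∈ Ubar, ∃ a b, a ≠ b ∧ E u a ∧ E u b) {v o : V}
    (h : observedDesc E Ubar v = {o}) : v = o := by
  have hchild : ∀ u ∈ Ubar, ∃ c, E u c := fun u hu =>
    let ⟨a, _, _, ha, _⟩ := hI1 u hu; ⟨a, ha⟩
  induction v using (wellFounded_flip_transGen hac).induction with
  | _ v ih =>
    by_cases hv : v ∈ Ubar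
    · obtain ⟨a, b, hab, ha, hb⟩ := hI1 v hv
      have hchild_eq : ∀ c, E v c → c = o := fun c hc =>
        ih c (.single hc) ((observedDesc_nonempty hac hchild c).subset_singleton_iff.1
          (h ▸ observedDesc_anti (.single hc)))
      exact absurd ((hchild_eq a ha).trans (hchild_eq b hb).symm) hab
    · have hvv : v ∈ observedDesc E Ubar v := ⟨.refl, hv⟩
      rwa [h] at hvv

theorem IsTTT.reflTransGen_total_of_observedDesc_eq [Finite V] (hE : IsTTT E)
    (hsrc : ∃! s, ∀ w, ¬ E w s) (hchild : ∀ u ∈ Ubar, ∃ c, E u c) {v w : V}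
    (h : observedDesc E Ubar v = observedDesc E Ubar w) :
    ReflTransGen E v w ∨ ReflTransGen E w v := by
  obtain ⟨o, ho⟩ := observedDesc_nonempty hE.1 hchild v
  exact hE.reflTransGen_total_of_reflTransGen hsrc ho.1 (h ▸ ho).1

theorem mem_of_transGen_of_observedDesc_eq (hac : ∀ v, ¬ TransGen E v v) {x y : V}
    (hxy : TransGen E x y) (h : observedDesc E Ubar x = observedDesc E Ubar y) : x ∈ Ubar := by
  by_contra hx
  have hxy' : x ∈ observedDesc E Ubar y := h ▸ ⟨.refl, hx⟩
  exact hac x (hxy.trans_left hxy'.1)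

theorem IsTTT.reflTransGen_of_coversIn [Finite V] (hE : IsTTT E) (hsrc : ∃! s, ∀ w, ¬ E w s)
    (hchild : ∀ u ∈ Ubar, ∃ c, E u c) {D : Set V} {x y : V}
    (hxy : CoversIn E {v | observedDesc E Ubar v = D} x y) :
    ∀ z, TransGen E x z → ReflTransGen E y z := by
  obtain ⟨hx, hy, -, hgap⟩ := hxy
  intro z hxz
  obtain ⟨o, ho⟩ := observedDesc_nonempty hE.1 hchild z
  have hoy : o ∈ observedDesc E Ubar y := hy ▸ hx ▸ observedDesc_anti hxz.to_reflTransGen ho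
  rcases hE.reflTransGen_total_of_reflTransGen hsrc ho.1 hoy.1 with hzy | hyz
  · have hz : observedDesc E Ubar z = D := subset_antisymm
      (hx ▸ observedDesc_anti hxz.to_reflTransGen) (hy ▸ observedDesc_anti hzy)
    rw [hgap z hz hxz hzy]
  · exact hyz

end Observed

section Covers

variable {E : V → V → Prop} {W : Set V}

theorem exists_coversIn [Finite V] (hac : ∀ v, ¬ TransGen E v v) {v y : V} (hv : v ∈ W)
    (hy : y ∈ W) (hvy : TransGen E v y) : ∃ x, CoversIn E W x y := by
  obtain ⟨x, ⟨hxW, hxy⟩, hmax⟩ :=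
    exists_transGen_maximal hac (S := {x | x ∈ W ∧ TransGen E x y}) ⟨v, hv, hvy⟩
  refine ⟨x, hxW, hy, hxy, fun z hzW hxz hzy => ?_⟩
  by_contra hne
  exact hmax z ⟨hzW, transGen_of_reflTransGen_of_ne hzy hne⟩ hxz

theorem exists_coversIn_coversIn [Finite V] (hac : ∀ v, ¬ TransGen E v v)
    (htotal : ∀ v ∈ W, ∀ w ∈ W, ReflTransGen E v w ∨ ReflTransGen E w v) {i j k : V}
    (hi : i ∈ W) (hj : j ∈ W) (hk : k ∈ W) (hij : i ≠ j) (hik : i ≠ k) (hjk : j ≠ k) :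
    ∃ w x y, CoversIn E W w x ∧ CoversIn E W x y := by
  obtain ⟨y, hy, hymax⟩ := exists_transGen_maximal hac ⟨i, hi⟩
  have hbelow : ∀ v ∈ W, v ≠ y → TransGen E v y := fun v hv hvy =>
    (htotal v hv y hy).elim (transGen_of_reflTransGen_of_ne · hvy)
      fun hyv => absurd (transGen_of_reflTransGen_of_ne hyv hvy.symm) (hymax v hv)
  obtain ⟨x, hxy⟩ : ∃ x, CoversIn E W x y := by
    by_cases hiy : i = y
    · exact exists_coversIn hac hj hy (hbelow j hj (hiy ▸ hij.symm))
    · exact exists_coversIn hac hi hy (hbelow i hi hiy)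
  obtain ⟨v, hv, hvx, hvy⟩ : ∃ v ∈ W, v ≠ x ∧ v ≠ y := by
    by_cases hix : i = x <;> by_cases hjx : j = x <;> grind
  have hvx' : TransGen E v x :=
    (htotal v hv x hxy.1).elim (transGen_of_reflTransGen_of_ne · hvx) fun hxv =>
      absurd (hxy.2.2.2 v hv (transGen_of_reflTransGen_of_ne hxv hvx.symm)
        (hbelow v hv hvy).to_reflTransGen) hvy
  obtain ⟨w, hwx⟩ := exists_coversIn hac hv hxy.1 hvx'
  exact ⟨w, x, y, hwx, hxy⟩

end Covers

theorem stmt19_general {V : Type u} [Fintype V] (E : V → V → Prop)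
    (httt : IsTTT E) (hsrc : ∃! u : V, ∀ w, ¬ E w u)
    (Ubar : Set V)
    (hI1 : ∀ u ∈ Ubar, ∃ a b : V, a ≠ b ∧ E u a ∧ E u b)
    (hI2 : ∀ u ∈ Ubar, ∃ S : Set V, IsMaxClique (skeleton E) S ∧ u ∈ S ∧
      ∀ w ∈ S, ¬ E w u)
    (i j : V) (hij : i ≠ j)
    (hD : {w | Relation.ReflTransGen E i w} ∩ Ubarᶜ =
          {w | Relation.ReflTransGen E j w} ∩ Ubarᶜ) :
    2 ≤ ({w | Relation.ReflTransGen E i w} ∩ Ubarᶜ).ncard ∧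
    ∀ k : V, k ≠ i → k ≠ j →
      {w | Relation.ReflTransGen E k w} ∩ Ubarᶜ ≠
      {w | Relation.ReflTransGen E i w} ∩ Ubarᶜ := by
  change observedDesc E Ubar i = observedDesc E Ubar j at hD
  change 2 ≤ (observedDesc E Ubar i).ncard ∧
    ∀ k, k ≠ i → k ≠ j → observedDesc E Ubar k ≠ observedDesc E Ubar i
  have hac := httt.1
  have hchild : ∀ u ∈ Ubar, ∃ c, E u c := fun u hu =>
    let ⟨a, _, _, ha, _⟩ := hI1 u hu; ⟨a, ha⟩
  refine ⟨?_, fun k hki hkj hk => ?_⟩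
  · by_contra! hlt
    have hpos := (Set.ncard_pos (Set.toFinite _)).2 (observedDesc_nonempty hac hchild i)
    obtain ⟨o, ho⟩ := Set.ncard_eq_one.1 (by omega : (observedDesc E Ubar i).ncard = 1)
    exact hij ((eq_of_observedDesc_eq_singleton hac hI1 ho).trans
      (eq_of_observedDesc_eq_singleton hac hI1 (hD ▸ ho)).symm)
  · set W := {v | observedDesc E Ubar v = observedDesc E Ubar i}
    have hlatent : ∀ {a b}, CoversIn E W a b → a ∈ Ubar := fun h =>
      mem_of_transGen_of_observedDesc_eq hac h.2.2.1 (h.1.trans h.2.1.symm)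
    obtain ⟨w, x, y, hwx, hxy⟩ := exists_coversIn_coversIn hac
      (fun v hv v' hv' =>
        httt.reflTransGen_total_of_observedDesc_eq hsrc hchild (hv.trans hv'.symm))
      (show i ∈ W from rfl) hD.symm hk hij hki.symm hkj.symm
    have hdw := httt.reflTransGen_of_coversIn hsrc hchild hwx
    have hdx := httt.reflTransGen_of_coversIn hsrc hchild hxy
    exact httt.not_maxClique_source (edge_of_forall_transGen hac hwx.2.2.1 hdw)
      (edge_of_forall_transGen hac hxy.2.2.1 hdx) (hI1 w (hlatent hwx)) hdw hdx
      (hI2 x (hlatent hxy))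

/-- In a ttt with unique source whose latent nodes `Ū` satisfy (I1)-(I2): if
`Desc(i) ∩ U = Desc(j) ∩ U` for distinct `i, j`, then this set has at least two
elements, and no third node has the same set of observable descendants. -/
theorem stmt19 {V : Type u} [Fintype V] (E : V → V → Prop)
    (httt : IsTTT E) (hsrc : ∃! u : V, ∀ w, ¬ E w u)
    (Ubar : Set V) (hU : (Ubarᶜ : Set V).Nonempty)
    (hI1 : ∀ u ∈ Ubar, ∃ a b : V, a ≠ b ∧ E u a ∧ E u b)
    (hI2 : ∀ u ∈ Ubar, ∃ S : Set V, IsMaxClique (skeleton E) S ∧ u ∈ S ∧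
      ∀ w ∈ S, ¬ E w u)
    (i j : V) (hij : i ≠ j)
    (hD : {w | Relation.ReflTransGen E i w} ∩ Ubarᶜ =
          {w | Relation.ReflTransGen E j w} ∩ Ubarᶜ) :
    2 ≤ ({w | Relation.ReflTransGen E i w} ∩ Ubarᶜ).ncard ∧
    ∀ k : V, k ≠ i → k ≠ j →
      {w | Relation.ReflTransGen E k w} ∩ Ubarᶜ ≠
      {w | Relation.ReflTransGen E i w} ∩ Ubarᶜ :=
  stmt19_general E httt hsrc Ubar hI1 hI2 i j hij hD
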